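/- Fix ε > 0 and define V_ε(ξ) = (1/2)·log(√((1 − ξ²)² + ε²)/√(1 + ε²)). Then there exists an even, twice continuously differentiable function u : ℝ → ℝ with u(0) = √2, 0 < u(x) ≤ √2 for all x, and u(x) → 0 as |x| → ∞, satisfying for all x ∈ ℝ both the regularized equation u''(x) = u(x)·(1 − u(x)²)/((1 − u(x)²)² + ε²) and the first-order invariant (1/2)·u'(x)² + V_ε(u(x)) = 0. -/

import Mathlib

/-!
At the zero level the invariant reads `u'² = -2 V(u)`, and a quadrature in `u` is singular at the
turning point `u = c` (here `c = √2`). Substituting `u = c - σ²` removes the singularity: since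
`V c = 0 < V' c`, one has `-2 V (c - σ²) = σ² m(σ)` with `m = energyQuot V c` a continuous,
positive difference quotient, and `u' = -σ √m(σ)` becomes the regular autonomous equation
`σ' = √m(σ) / 2`. Its solution through `σ = 0` is the inverse of the travel time
`s ↦ ∫₀ˢ 2 / √m`; as `V` vanishes at most quadratically at `0`, `m(σ) = O((√c - σ)²)` when
`σ → √c`, so the travel time diverges and `σ` is global, odd and tends to `√c`. Differentiating the
invariant gives `u'' = -V'(u)` wherever `u' ≠ 0`, that is for `x ≠ 0`, and at `x = 0` by
continuity of the right-hand side.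

For `V_ε` the hypotheses are `V_ε'(√2) = √2 / (1 + ε²) > 0` and `-V_ε(ξ) ≤ ξ² / (2ε²)`, the latter
from `log x ≤ x - 1` and `(1 - ξ²)² + ε² ≥ ε²`.
-/

open Filter Set Topology

section Quadrature

variable {g : ℝ → ℝ} {b : ℝ}

theorem hasDerivAt_integral_of_continuousOn_Ioo (hg : ContinuousOn g (Ioo (-b) b)) {s : ℝ}
    (hs : s ∈ Ioo (-b) b) : HasDerivAt (fun s => ∫ t in (0 : ℝ)..s, g t) (g s) s := by
  have h0 : (0 : ℝ) ∈ Ioo (-b) b := ⟨by linarith [hs.1, hs.2], by linarith [hs.1, hs.2]⟩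
  exact intervalIntegral.integral_hasDerivAt_right
    (hg.mono (ordConnected_Ioo.uIcc_subset h0 hs)).intervalIntegrable
    (hg.stronglyMeasurableAtFilter isOpen_Ioo s hs) (hg.continuousAt (isOpen_Ioo.mem_nhds hs))

/-- `q` is the inverse of the travel time `s ↦ ∫ t in 0..s, g t`, an increasing bijection from
`(-b, b)` onto `ℝ`. -/
theorem exists_odd_strictMono_hasDerivAt_inv (hb : 0 < b) (hg : ContinuousOn g (Ioo (-b) b))
    (hpos : ∀ s ∈ Ioo (-b) b, 0 < g s) (heven : ∀ s, g (-s) = g s)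
    (hdiv : Tendsto (fun s => ∫ t in (0 : ℝ)..s, g t) (𝓝[<] b) atTop) :
    ∃ q : ℝ → ℝ, (∀ x, q x ∈ Ioo (-b) b) ∧ (∀ x, HasDerivAt q (g (q x))⁻¹ x) ∧
      StrictMono q ∧ (∀ x, q (-x) = -q x) ∧ Tendsto q atTop (𝓝 b) := by
  set H := fun s => ∫ t in (0 : ℝ)..s, g t with hH_def
  have hH : ∀ s ∈ Ioo (-b) b, HasDerivAt H (g s) s := fun s hs =>
    hasDerivAt_integral_of_continuousOn_Ioo hg hs
  have hH_cont : ContinuousOn H (Ioo (-b) b) := fun s hs =>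
    (hH s hs).continuousAt.continuousWithinAt
  have hH_odd : ∀ s, H (-s) = -H s := fun s => by
    simp only [hH_def]
    rw [intervalIntegral.integral_symm, ← neg_zero, ← intervalIntegral.integral_comp_neg]
    simp only [heven, neg_zero]
  have hH_mono : StrictMonoOn H (Ioo (-b) b) := by
    refine strictMonoOn_of_deriv_pos (convex_Ioo _ _) hH_cont fun s hs => ?_
    rw [interior_Ioo] at hs
    rw [(hH s hs).deriv]
    exact hpos s hs
  have hdiv' : Tendsto H (𝓝[>] (-b)) atBot := by
    have := tendsto_neg_atTop_atBot.comp (hdiv.comp (tendsto_neg_nhdsGT_neg (a := b)))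
    refine this.congr fun s => ?_
    simp only [Function.comp_apply, hH_odd, neg_neg]
  have hH_surj : SurjOn H (Ioo (-b) b) univ :=
    hH_cont.surjOn_of_tendsto ⟨0, by linarith, hb⟩
      ((tendsto_comp_coe_Ioo_atBot (by linarith)).2 hdiv')
      ((tendsto_comp_coe_Ioo_atTop (by linarith)).2 hdiv)
  let e : Ioo (-b) b ≃o ℝ := StrictMono.orderIsoOfSurjective (fun s => H s)
    (fun s t hst => hH_mono s.2 t.2 hst)
    (fun y => let ⟨s, hs, hsy⟩ := hH_surj (mem_univ y); ⟨⟨s, hs⟩, hsy⟩)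
  have hHe : ∀ x, H (e.symm x) = x := e.apply_symm_apply
  refine ⟨fun x => e.symm x, fun x => (e.symm x).2, fun x => ?_, ?_, fun x => ?_, ?_⟩
  · exact HasDerivAt.of_local_left_inverse
      (continuous_subtype_val.comp e.symm.continuous).continuousAt (hH _ (e.symm x).2)
      (hpos _ (e.symm x).2).ne' (Eventually.of_forall hHe)
  · exact Subtype.strictMono_coe _ |>.comp e.symm.strictMono
  · have hmem : -(e.symm x : ℝ) ∈ Ioo (-b) b :=
      ⟨neg_lt_neg (e.symm x).2.2, by linarith [(e.symm x).2.1]⟩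
    have : e.symm (-x) = ⟨_, hmem⟩ := by
      rw [e.symm_apply_eq]
      show -x = H _
      rw [hH_odd, hHe]
    simp only [this]
  · exact ((tendsto_Ioo_atTop).1 e.symm.tendsto_atTop).mono_right nhdsWithin_le_nhds

end Quadrature

theorem tendsto_integral_atTop_of_inv_sub_le {g : ℝ → ℝ} {a b C : ℝ} (hab : a < b) (hC : 0 < C)
    (hg : ContinuousOn g (Ico a b)) (hle : ∀ s ∈ Ico a b, C * (b - s)⁻¹ ≤ g s) :
    Tendsto (fun s => ∫ t in a..s, g t) (𝓝[<] b) atTop := by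
  have hsub : Tendsto (fun s => b - s) (𝓝[<] b) (𝓝[>] 0) :=
    tendsto_nhdsWithin_iff.2
      ⟨((continuous_const.sub continuous_id).tendsto' b 0 (sub_self b)).mono_left
        nhdsWithin_le_nhds, eventually_mem_nhdsWithin.mono fun s hs => mem_Ioi.2 (sub_pos.2 hs)⟩
  have hlog : Tendsto (fun s => C * Real.log ((b - a) * (b - s)⁻¹)) (𝓝[<] b) atTop :=
    (Real.tendsto_log_atTop.comp <|
      (tendsto_inv_nhdsGT_zero.comp hsub).const_mul_atTop (sub_pos.2 hab)).const_mul_atTop hC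
  refine tendsto_atTop_mono' _ ?_ hlog
  filter_upwards [Ioo_mem_nhdsLT hab] with s hs
  have hint : ContinuousOn (fun t => C * (b - t)⁻¹) (Icc a s) :=
    continuousOn_const.mul <| ContinuousOn.inv₀ (by fun_prop) fun t ht =>
      (sub_pos.2 (ht.2.trans_lt hs.2)).ne'
  calc C * Real.log ((b - a) * (b - s)⁻¹) = ∫ t in a..s, C * (b - t)⁻¹ := by
        rw [intervalIntegral.integral_const_mul,
          intervalIntegral.integral_comp_sub_left (fun x => x⁻¹),
          integral_inv_of_pos (by linarith [hs.2]) (by linarith), div_eq_mul_inv]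
    _ ≤ ∫ t in a..s, g t := by
        refine intervalIntegral.integral_mono_on hs.1.le ?_ ?_ fun t ht =>
          hle t ⟨ht.1, ht.2.trans_lt hs.2⟩
        · exact hint.intervalIntegrable_of_Icc hs.1.le
        · exact (hg.mono (Icc_subset_Ico_right hs.2)).intervalIntegrable_of_Icc hs.1.le

theorem HasDerivAt.eq_div_two_of_sq_eq_comp {u w P : ℝ → ℝ} {x d p : ℝ} (hw : HasDerivAt w d x)
    (hu : HasDerivAt u (w x) x) (hP : HasDerivAt P p (u x)) (hsq : ∀ y, w y ^ 2 = P (u y))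
    (hx : w x ≠ 0) : d = p / 2 := by
  have h1 : HasDerivAt (fun y => w y ^ 2) (2 * w x * d) x := by
    simpa using hw.fun_pow 2
  have h2 : HasDerivAt (fun y => w y ^ 2) (p * w x) x := by
    simpa only [Function.comp_def, ← hsq] using hP.comp x hu
  have := h1.unique h2
  field_simp
  exact mul_left_cancel₀ hx (by linarith)

theorem contDiff_two_of_hasDerivAt {u w a : ℝ → ℝ} (hu : ∀ x, HasDerivAt u (w x) x)
    (hw : ∀ x, HasDerivAt w (a x) x) (ha : Continuous a) : ContDiff ℝ 2 u := by
  have hu' : deriv u = w := funext fun x => (hu x).deriv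
  have hw' : deriv w = a := funext fun x => (hw x).deriv
  rw [show (2 : WithTop ℕ∞) = 1 + 1 from rfl, contDiff_succ_iff_deriv, hu']
  exact ⟨fun x => (hu x).differentiableAt, by simp,
    contDiff_one_iff_deriv.2 ⟨fun x => (hw x).differentiableAt, hw' ▸ ha⟩⟩

theorem tendsto_cocompact_of_even {α : Type*} {u : ℝ → α} {l : Filter α}
    (heven : ∀ x, u (-x) = u x) (h : Tendsto u atTop l) : Tendsto u (cocompact ℝ) l := by
  rw [cocompact_eq_atBot_atTop, tendsto_sup]
  refine ⟨?_, h⟩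
  simpa [Function.comp_def, heven] using h.comp tendsto_neg_atBot_atTop

noncomputable def energyQuot (V : ℝ → ℝ) (c σ : ℝ) : ℝ :=
  dslope (fun t => -2 * V (c - t)) 0 (σ ^ 2)

section SolitaryWave

variable {V : ℝ → ℝ} {c K : ℝ} {q : ℝ → ℝ}

theorem sq_mul_energyQuot (hVc : V c = 0) (σ : ℝ) :
    σ ^ 2 * energyQuot V c σ = -2 * V (c - σ ^ 2) := by
  have h := sub_smul_dslope (fun t => -2 * V (c - t)) 0 (σ ^ 2)
  simp only [sub_zero, smul_eq_mul, hVc, mul_zero] at h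
  exact h

theorem energyQuot_zero (hV : DifferentiableAt ℝ V c) : energyQuot V c 0 = 2 * deriv V c := by
  have hG : HasDerivAt (fun t => -2 * V (c - t)) (-2 * -deriv V c) 0 :=
    (HasDerivAt.comp_const_sub c 0 (by simpa using hV.hasDerivAt)).const_mul (-2)
  rw [energyQuot, zero_pow two_ne_zero, dslope_same, hG.deriv]
  ring

theorem continuous_energyQuot (hV : Differentiable ℝ V) : Continuous (energyQuot V c) := by
  have hG : Differentiable ℝ (fun t => -2 * V (c - t)) := by fun_prop
  refine .comp (continuous_iff_continuousAt.2 fun t => ?_) (continuous_pow 2)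
  rcases eq_or_ne t 0 with rfl | ht
  · exact continuousAt_dslope_same.2 (hG 0)
  · exact (continuousAt_dslope_of_ne ht).2 (hG t).continuousAt

theorem differentiableAt_energyQuot (hV : Differentiable ℝ V) {σ : ℝ} (hσ : σ ≠ 0) :
    DifferentiableAt ℝ (energyQuot V c) σ := by
  have hG : Differentiable ℝ (fun t => -2 * V (c - t)) := by fun_prop
  exact ((differentiableAt_dslope_of_ne (pow_ne_zero 2 hσ)).2 (hG _)).comp (f := fun x => x ^ 2)
    σ (differentiableAt_pow 2)

theorem energyQuot_pos (hV : DifferentiableAt ℝ V c) (hVc : V c = 0) (hV'c : 0 < deriv V c)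
    (hneg : ∀ ξ ∈ Ioo 0 c, V ξ < 0) {σ : ℝ} (hσ : σ ^ 2 < c) : 0 < energyQuot V c σ := by
  rcases eq_or_ne σ 0 with rfl | hσ0
  · rw [energyQuot_zero hV]
    linarith
  · have hσ2 : 0 < σ ^ 2 := by positivity
    have hVσ := hneg (c - σ ^ 2) ⟨by linarith, by linarith⟩
    refine (mul_pos_iff_of_pos_left hσ2).1 ?_
    rw [sq_mul_energyQuot hVc]
    linarith

theorem energyQuot_le (hVc : V c = 0) (hK : ∀ ξ ∈ Ioo 0 c, -V ξ ≤ K * ξ ^ 2) (hK0 : 0 ≤ K)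
    {σ : ℝ} (hσ : √c / 2 ≤ σ) (hσc : σ < √c) :
    energyQuot V c σ ≤ 32 * K * (√c - σ) ^ 2 := by
  have hc : 0 < √c := by linarith
  have hσ0 : 0 < σ := by linarith
  have hsq : √c ^ 2 = c := Real.sq_sqrt (Real.sqrt_pos.1 hc).le
  have hξ : c - σ ^ 2 = (√c - σ) * (√c + σ) := by linear_combination -hsq
  have hξpos : 0 < c - σ ^ 2 := by rw [hξ]; exact mul_pos (by linarith) (by linarith)
  have hV := hK (c - σ ^ 2) ⟨hξpos, by nlinarith⟩
  have hmul := sq_mul_energyQuot hVc σ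
  have key : σ ^ 2 * energyQuot V c σ ≤ σ ^ 2 * (32 * K * (√c - σ) ^ 2) := by
    rw [hmul]
    calc -2 * V (c - σ ^ 2) ≤ 2 * K * (c - σ ^ 2) ^ 2 := by linarith
      _ = 2 * K * (√c + σ) ^ 2 * (√c - σ) ^ 2 := by rw [hξ]; ring
      _ ≤ 2 * K * (4 * σ) ^ 2 * (√c - σ) ^ 2 := by gcongr; linarith
      _ = σ ^ 2 * (32 * K * (√c - σ) ^ 2) := by ring
  exact le_of_mul_le_mul_left key (by positivity)

theorem continuousOn_two_div_sqrt_energyQuot (hV : Differentiable ℝ V) (hVc : V c = 0)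
    (hV'c : 0 < deriv V c) (hneg : ∀ ξ ∈ Ioo 0 c, V ξ < 0) :
    ContinuousOn (fun σ => 2 / √(energyQuot V c σ)) (Ioo (-√c) √c) :=
  continuousOn_const.div (continuous_energyQuot hV).sqrt.continuousOn fun _ hσ =>
    (Real.sqrt_pos.2 (energyQuot_pos (hV c) hVc hV'c hneg (Real.sq_lt.2 hσ))).ne'

theorem tendsto_integral_two_div_sqrt_energyQuot (hV : Differentiable ℝ V) (hc : 0 < c)
    (hVc : V c = 0) (hV'c : 0 < deriv V c) (hneg : ∀ ξ ∈ Ioo 0 c, V ξ < 0)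
    (hK : ∀ ξ ∈ Ioo 0 c, -V ξ ≤ K * ξ ^ 2) :
    Tendsto (fun s => ∫ σ in (0 : ℝ)..s, 2 / √(energyQuot V c σ)) (𝓝[<] √c) atTop := by
  set g := fun σ => 2 / √(energyQuot V c σ)
  set b := √c
  have hb : 0 < b := Real.sqrt_pos.2 hc
  have hg := continuousOn_two_div_sqrt_energyQuot hV hVc hV'c hneg
  have hK0 : 0 < K := by
    have h1 := hK (c / 2) ⟨by linarith, by linarith⟩
    have h2 := hneg (c / 2) ⟨by linarith, by linarith⟩
    exact pos_of_mul_pos_left (by linarith) (sq_nonneg (c / 2))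
  have hC : 0 < 2 / √(32 * K) := by positivity
  have hlower : ∀ σ ∈ Ico (b / 2) b, 2 / √(32 * K) * (b - σ)⁻¹ ≤ g σ := fun σ hσ => by
    have hm := energyQuot_pos (hV c) hVc hV'c hneg (Real.sq_lt.2 ⟨by linarith [hσ.1], hσ.2⟩)
    have hle : √(energyQuot V c σ) ≤ √(32 * K) * (b - σ) := by
      rw [← Real.sqrt_sq (sub_pos.2 hσ.2).le, ← Real.sqrt_mul (by positivity)]
      exact Real.sqrt_le_sqrt (energyQuot_le hVc hK hK0.le hσ.1 hσ.2)
    rw [← div_eq_mul_inv, div_div]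
    exact div_le_div_of_nonneg_left zero_le_two (Real.sqrt_pos.2 hm) hle
  have hhalf : Tendsto (fun s => ∫ σ in (b / 2)..s, g σ) (𝓝[<] b) atTop :=
    tendsto_integral_atTop_of_inv_sub_le (by linarith) hC
      (hg.mono fun σ hσ => ⟨by linarith [hσ.1], hσ.2⟩) hlower
  refine (tendsto_atTop_add_const_left _ (∫ σ in (0 : ℝ)..(b / 2), g σ) hhalf).congr' ?_
  filter_upwards [Ioo_mem_nhdsLT (show b / 2 < b by linarith)] with s hs
  have hint : ∀ {x y}, x ∈ Ioo (-b) b → y ∈ Ioo (-b) b →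
      IntervalIntegrable g MeasureTheory.volume x y :=
    fun hx hy => (hg.mono (ordConnected_Ioo.uIcc_subset hx hy)).intervalIntegrable
  exact intervalIntegral.integral_add_adjacent_intervals
    (hint ⟨by linarith, hb⟩ ⟨by linarith, by linarith⟩)
    (hint ⟨by linarith, by linarith⟩ ⟨by linarith [hs.1], hs.2⟩)

theorem neg_mul_sqrt_energyQuot_sq (hVc : V c = 0) {σ : ℝ} (hσ : 0 ≤ energyQuot V c σ) :
    (-(σ * √(energyQuot V c σ))) ^ 2 = -2 * V (c - σ ^ 2) := by
  rw [neg_sq, mul_pow, Real.sq_sqrt hσ, sq_mul_energyQuot hVc]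

theorem HasDerivAt.sub_sq_of_sqrt_energyQuot {x : ℝ}
    (hq : HasDerivAt q (√(energyQuot V c (q x)) / 2) x) :
    HasDerivAt (fun y => c - q y ^ 2) (-(q x * √(energyQuot V c (q x)))) x := by
  refine ((hq.fun_pow 2).const_sub c).congr_deriv ?_
  ring

/-- For `x ≠ 0` the speed `-(q √m(q))` does not vanish, so its derivative is read off the
derivative of the energy identity `(-(q √m(q)))² = -2 V (c - q²)`; at `x = 0` it extends by
continuity. -/
theorem hasDerivAt_neg_mul_sqrt_energyQuot (hV : ContDiff ℝ 1 V) (hVc : V c = 0)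
    (hV'c : 0 < deriv V c) (hneg : ∀ ξ ∈ Ioo 0 c, V ξ < 0) (hq2 : ∀ x, q x ^ 2 < c)
    (hq : ∀ x, HasDerivAt q (√(energyQuot V c (q x)) / 2) x) (hq0 : ∀ x ≠ 0, q x ≠ 0) (x : ℝ) :
    HasDerivAt (fun y => -(q y * √(energyQuot V c (q y)))) (-deriv V (c - q x ^ 2)) x := by
  have hVd := hV.differentiable one_ne_zero
  have hm : ∀ y, 0 < energyQuot V c (q y) := fun y => energyQuot_pos (hVd c) hVc hV'c hneg (hq2 y)
  have hq_cont : Continuous q := continuous_iff_continuousAt.2 fun y => (hq y).continuousAt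
  have hne : ∀ y ≠ 0, HasDerivAt (fun y => -(q y * √(energyQuot V c (q y))))
      (-deriv V (c - q y ^ 2)) y := fun y hy => by
    have hw : DifferentiableAt ℝ (fun y => -(q y * √(energyQuot V c (q y)))) y :=
      ((hq y).differentiableAt.mul <|
        ((differentiableAt_energyQuot hVd (hq0 y hy)).comp y (hq y).differentiableAt).sqrt
          (hm y).ne').neg
    have hd := hw.hasDerivAt.eq_div_two_of_sq_eq_comp (P := fun ξ => -2 * V ξ)
      (hq y).sub_sq_of_sqrt_energyQuot ((hVd _).hasDerivAt.const_mul (-2))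
      (fun z => neg_mul_sqrt_energyQuot_sq hVc (hm z).le)
      (neg_ne_zero.2 (mul_ne_zero (hq0 y hy) (Real.sqrt_pos.2 (hm y)).ne'))
    have h := hw.hasDerivAt
    rwa [hd, neg_mul, neg_div, mul_div_cancel_left₀ _ two_ne_zero] at h
  rcases eq_or_ne x 0 with rfl | hx
  · refine hasDerivAt_of_hasDerivAt_of_ne hne ?_ ?_
    · exact (hq_cont.mul ((continuous_energyQuot hVd).comp hq_cont).sqrt).neg.continuousAt
    · exact ((hV.continuous_deriv le_rfl).comp
        (continuous_const.sub (hq_cont.pow 2))).neg.continuousAt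
  · exact hne x hx

theorem exists_even_solitary_wave (hc : 0 < c) (hV : ContDiff ℝ 1 V) (hVc : V c = 0)
    (hV'c : 0 < deriv V c) (hneg : ∀ ξ ∈ Ioo 0 c, V ξ < 0)
    (hK : ∀ ξ ∈ Ioo 0 c, -V ξ ≤ K * ξ ^ 2) :
    ∃ u : ℝ → ℝ, (∀ x, u (-x) = u x) ∧ ContDiff ℝ 2 u ∧ u 0 = c ∧ (∀ x, 0 < u x ∧ u x ≤ c) ∧
      Tendsto u (cocompact ℝ) (𝓝 0) ∧ (∀ x, deriv (deriv u) x = -deriv V (u x)) ∧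
      (∀ x, (1 / 2) * deriv u x ^ 2 + V (u x) = 0) := by
  have hVd := hV.differentiable one_ne_zero
  obtain ⟨q, hq_mem, hq, hq_mono, hq_odd, hq_lim⟩ := exists_odd_strictMono_hasDerivAt_inv
    (Real.sqrt_pos.2 hc) (continuousOn_two_div_sqrt_energyQuot hVd hVc hV'c hneg)
    (fun σ hσ => div_pos two_pos <| Real.sqrt_pos.2 <|
      energyQuot_pos (hVd c) hVc hV'c hneg (Real.sq_lt.2 hσ))
    (fun σ => by simp [energyQuot])
    (tendsto_integral_two_div_sqrt_energyQuot hVd hc hVc hV'c hneg hK)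
  simp only [inv_div] at hq
  have hq2 : ∀ x, q x ^ 2 < c := fun x => Real.sq_lt.2 (hq_mem x)
  have hq_zero : q 0 = 0 := self_eq_neg.1 (by simpa using hq_odd 0)
  have hq0 : ∀ x ≠ 0, q x ≠ 0 := fun x hx => hq_zero ▸ hq_mono.injective.ne hx
  have hu := fun x => (hq x).sub_sq_of_sqrt_energyQuot
  have hw := hasDerivAt_neg_mul_sqrt_energyQuot hV hVc hV'c hneg hq2 hq hq0
  have hderiv : deriv (fun y => c - q y ^ 2) = fun y => -(q y * √(energyQuot V c (q y))) :=
    funext fun x => (hu x).deriv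
  have heven : ∀ x, c - q (-x) ^ 2 = c - q x ^ 2 := fun x => by rw [hq_odd, neg_sq]
  refine ⟨fun x => c - q x ^ 2, heven, contDiff_two_of_hasDerivAt hu hw ?_, by simp [hq_zero],
    fun x => ⟨by linarith [hq2 x], by linarith [sq_nonneg (q x)]⟩,
    tendsto_cocompact_of_even heven ?_, fun x => by rw [hderiv]; exact (hw x).deriv,
    fun x => ?_⟩
  · have hq_cont : Continuous q := continuous_iff_continuousAt.2 fun y => (hq y).continuousAt
    exact ((hV.continuous_deriv le_rfl).comp (continuous_const.sub (hq_cont.pow 2))).neg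
  · simpa [Real.sq_sqrt hc.le] using (hq_lim.pow 2).const_sub c
  · rw [hderiv]
    dsimp only
    rw [neg_mul_sqrt_energyQuot_sq hVc (energyQuot_pos (hVd c) hVc hV'c hneg (hq2 x)).le]
    ring

end SolitaryWave

noncomputable def regularizedPotential (ε ξ : ℝ) : ℝ :=
  (1 / 2) * Real.log (Real.sqrt ((1 - ξ ^ 2) ^ 2 + ε ^ 2) / Real.sqrt (1 + ε ^ 2))

section RegularizedPotential

variable {ε : ℝ}

theorem regularizedPotential_eq (hε : ε ≠ 0) (ξ : ℝ) :
    regularizedPotential ε ξ =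
      (Real.log ((1 - ξ ^ 2) ^ 2 + ε ^ 2) - Real.log (1 + ε ^ 2)) / 4 := by
  have hA : 0 < (1 - ξ ^ 2) ^ 2 + ε ^ 2 := by positivity
  have hB : 0 < 1 + ε ^ 2 := by positivity
  rw [regularizedPotential, Real.log_div (Real.sqrt_pos.2 hA).ne' (Real.sqrt_pos.2 hB).ne',
    Real.log_sqrt hA.le, Real.log_sqrt hB.le]
  ring

theorem hasDerivAt_regularizedPotential (hε : ε ≠ 0) (ξ : ℝ) :
    HasDerivAt (regularizedPotential ε)
      (-(ξ * (1 - ξ ^ 2) / ((1 - ξ ^ 2) ^ 2 + ε ^ 2))) ξ := by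
  have hA : 0 < (1 - ξ ^ 2) ^ 2 + ε ^ 2 := by positivity
  have h := ((((hasDerivAt_pow 2 ξ).const_sub 1).fun_pow 2).add_const (ε ^ 2)).log hA.ne'
  rw [funext (regularizedPotential_eq hε)]
  refine ((h.sub_const (Real.log (1 + ε ^ 2))).div_const 4).congr_deriv ?_
  field_simp
  ring

theorem contDiff_regularizedPotential (hε : ε ≠ 0) {n : WithTop ℕ∞} :
    ContDiff ℝ n (regularizedPotential ε) := by
  rw [funext (regularizedPotential_eq hε)]
  exact ((ContDiff.log (by fun_prop) fun ξ => by positivity).sub contDiff_const).div_const 4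

theorem regularizedPotential_sqrt_two (ε : ℝ) : regularizedPotential ε √2 = 0 := by
  have hB : 0 < √(1 + ε ^ 2) := by positivity
  rw [regularizedPotential, Real.sq_sqrt zero_le_two]
  norm_num [div_self hB.ne']

theorem deriv_regularizedPotential_sqrt_two_pos (hε : ε ≠ 0) :
    0 < deriv (regularizedPotential ε) √2 := by
  rw [(hasDerivAt_regularizedPotential hε _).deriv, Real.sq_sqrt zero_le_two,
    show -(√2 * (1 - 2) / ((1 - 2) ^ 2 + ε ^ 2)) = √2 / (1 + ε ^ 2) by ring]
  positivity

theorem regularizedPotential_neg (hε : ε ≠ 0) {ξ : ℝ} (hξ : ξ ∈ Ioo 0 √2) :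
    regularizedPotential ε ξ < 0 := by
  have hξ2 : ξ ^ 2 < 2 := (Real.lt_sqrt hξ.1.le).1 hξ.2
  have hlt : (1 - ξ ^ 2) ^ 2 + ε ^ 2 < 1 + ε ^ 2 := by
    nlinarith [mul_pos (pow_pos hξ.1 2) (sub_pos.2 hξ2)]
  have := Real.log_lt_log (by positivity) hlt
  rw [regularizedPotential_eq hε]
  linarith

theorem neg_regularizedPotential_le (hε : ε ≠ 0) (ξ : ℝ) :
    -regularizedPotential ε ξ ≤ (2 * ε ^ 2)⁻¹ * ξ ^ 2 := by
  set A := (1 - ξ ^ 2) ^ 2 + ε ^ 2 with hA_def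
  have hε2 : 0 < ε ^ 2 := by positivity
  have hA : ε ^ 2 ≤ A := by nlinarith
  have hlog : Real.log (1 + ε ^ 2) - Real.log A ≤ (1 + ε ^ 2 - A) / A := by
    rw [← Real.log_div (by positivity) (by positivity), sub_div, div_self (by positivity)]
    exact Real.log_le_sub_one_of_pos (by positivity)
  have hnum : 1 + ε ^ 2 - A ≤ 2 * ξ ^ 2 := by nlinarith [sq_nonneg ξ]
  rw [regularizedPotential_eq hε]
  calc -((Real.log A - Real.log (1 + ε ^ 2)) / 4) ≤ (1 + ε ^ 2 - A) / A / 4 := by linarith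
    _ ≤ 2 * ξ ^ 2 / ε ^ 2 / 4 := by gcongr
    _ = (2 * ε ^ 2)⁻¹ * ξ ^ 2 := by field_simp; ring

end RegularizedPotential

theorem exists_regularized_solitary_wave (ε : ℝ) (hε : 0 < ε) :
    ∃ u : ℝ → ℝ,
      (∀ x : ℝ, u (-x) = u x) ∧
      ContDiff ℝ 2 u ∧
      u 0 = Real.sqrt 2 ∧
      (∀ x : ℝ, 0 < u x ∧ u x ≤ Real.sqrt 2) ∧
      Tendsto u (cocompact ℝ) (nhds 0) ∧
      (∀ x : ℝ, deriv (deriv u) x =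
        u x * (1 - u x ^ 2) / ((1 - u x ^ 2) ^ 2 + ε ^ 2)) ∧
      (∀ x : ℝ, (1 / 2) * (deriv u x) ^ 2 +
        (1 / 2) * Real.log (Real.sqrt ((1 - u x ^ 2) ^ 2 + ε ^ 2) /
          Real.sqrt (1 + ε ^ 2)) = 0) := by
  obtain ⟨u, heven, hu, hu0, hbounds, hlim, hode, henergy⟩ :=
    exists_even_solitary_wave (Real.sqrt_pos.2 two_pos)
      (contDiff_regularizedPotential hε.ne') (regularizedPotential_sqrt_two ε)
      (deriv_regularizedPotential_sqrt_two_pos hε.ne')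
      (fun _ hξ => regularizedPotential_neg hε.ne' hξ)
      (fun ξ _ => neg_regularizedPotential_le hε.ne' ξ)
  refine ⟨u, heven, hu, hu0, hbounds, hlim, fun x => ?_, henergy⟩
  rw [hode, (hasDerivAt_regularizedPotential hε.ne' _).deriv, neg_neg]
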